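/- Let λ ∈ ℂ with λ ∉ ℚ and let f ∈ ℂ[[x,y]] with f(0,0) = 0. Then there exists a formal power series g ∈ ℂ[[x,y]] with g(0,0) = 1 such that the formal change of coordinates Φ(x,y) = (x, y·g(x,y)) transforms the formal 1-form ω = x dy − (λ + f)y dx into a form proportional (by a formal unit) to x dy − λ y dx; i.e., Φ*ω ∧ (x dy − λ y dx) = 0. -/

import Mathlib

open PowerSeries

-- We view `ℂ[[x,y]]` as `R[[y]]` with `R = ℂ[[x]]`.
local notation "R" => PowerSeries ℂ
local notation "S" => PowerSeries (PowerSeries ℂ)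

/-- Composition `f(g)` of formal power series over a commutative ring (intended for `g`
with zero constant term, where the `n`-th coefficient only involves `f₀, …, f_n`). -/
noncomputable def PowerSeries.comp' {A : Type*} [CommRing A] (f g : PowerSeries A) :
    PowerSeries A :=
  PowerSeries.mk fun n =>
    coeff n (∑ i ∈ Finset.range (n + 1), PowerSeries.C (coeff i f) * g ^ i)

/-- The operator `g ↦ x·∂g/∂x` on `ℂ[[x]][[y]]`, acting coefficientwise in `y`. -/
noncomputable def xDx (g : S) : S :=
  PowerSeries.mk fun n => X * derivative ℂ (coeff n g)

/-!
Dividing `P·x + λ·y·Q = 0` by `xy` turns it into `x ∂ₓg + λ y ∂ᵧg = f(x, y g)·g`. On the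
coefficient of `xᵐyⁿ` the left side is `(m + λn)·g_{n,m}`, and `m + λn ≠ 0` off `(0,0)` because
`λ ∉ ℚ`. Since `f(0,0) = 0` and `g` enters `f` only through `y·g`, the right side involves only
coefficients of `g` of total degree `< n + m`, so the coefficients of `g` are determined
recursively by total degree, starting from `g(0,0) = 1`.
-/

theorem WellFounded.exists_fixedPoint_of_causal {α β : Type*} [Nonempty β] {r : α → α → Prop}
    (hr : WellFounded r) (F : (α → β) → α → β)
    (hF : ∀ a c c', (∀ b, r b a → c b = c' b) → F c a = F c' a) :
    ∃ c, F c = c := by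
  classical
  let c := hr.fix fun a ih => F (fun b => if h : r b a then ih b h else Classical.arbitrary β) a
  refine ⟨c, funext fun a => ?_⟩
  rw [show c a = _ from hr.fix_eq _ a]
  exact hF a _ _ fun b hb => by rw [dif_pos hb]

theorem PowerSeries.coeff_X_mul_derivative {A : Type*} [CommSemiring A] (g : PowerSeries A)
    (n : ℕ) : coeff n (X * derivative A g) = n * coeff n g := by
  cases n with
  | zero => simp
  | succ n => rw [coeff_succ_X_mul, coeff_derivative, mul_comm]; push_cast; rfl

theorem PowerSeries.constantCoeff_comp' {A : Type*} [CommRing A] (f g : PowerSeries A) :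
    constantCoeff (PowerSeries.comp' f g) = constantCoeff f := by
  rw [← coeff_zero_eq_constantCoeff_apply, ← coeff_zero_eq_constantCoeff_apply]
  simp [PowerSeries.comp']

namespace FormalSaddle

lemma coeff_mul_eq_zero_of_lt_add {A B : S} {a b : ℕ}
    (hA : ∀ n m, n + m < a → coeff m (coeff n A) = 0)
    (hB : ∀ n m, n + m < b → coeff m (coeff n B) = 0)
    {n m : ℕ} (h : n + m < a + b) : coeff m (coeff n (A * B)) = 0 := by
  rw [coeff_mul, map_sum]
  refine Finset.sum_eq_zero fun p hp => ?_
  rw [coeff_mul]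
  refine Finset.sum_eq_zero fun q hq => ?_
  rw [Finset.HasAntidiagonal.mem_antidiagonal] at hp hq
  rcases lt_or_ge (p.1 + q.1) a with hlt | hge
  · rw [hA _ _ hlt, zero_mul]
  · rw [hB _ _ (by omega), mul_zero]

-- `coeff m (coeff n H)` is the coefficient of `yⁿ xᵐ`.
def totalOrderIdeal (k : ℕ) : Ideal S where
  carrier := {H | ∀ n m, n + m < k → coeff m (coeff n H) = 0}
  zero_mem' := by simp
  add_mem' hH hH' n m h := by simp [hH n m h, hH' n m h]
  smul_mem' c _ hH _ _ h :=
    coeff_mul_eq_zero_of_lt_add (a := 0) (fun _ _ h => absurd h (Nat.not_lt_zero _)) hH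
      (by omega)

lemma mem_totalOrderIdeal {k : ℕ} {H : S} :
    H ∈ totalOrderIdeal k ↔ ∀ n m, n + m < k → coeff m (coeff n H) = 0 := Iff.rfl

lemma mul_mem_totalOrderIdeal {a b : ℕ} {A B : S} (hA : A ∈ totalOrderIdeal a)
    (hB : B ∈ totalOrderIdeal b) : A * B ∈ totalOrderIdeal (a + b) :=
  fun _ _ h => coeff_mul_eq_zero_of_lt_add hA hB h

lemma mem_totalOrderIdeal_one {H : S} :
    H ∈ totalOrderIdeal 1 ↔ constantCoeff (constantCoeff H) = 0 := by
  rw [mem_totalOrderIdeal]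
  constructor
  · intro hH
    simpa using hH 0 0 one_pos
  · intro hH n m h
    obtain ⟨rfl, rfl⟩ : n = 0 ∧ m = 0 := by omega
    simpa using hH

lemma comp'_sub_comp'_mem_totalOrderIdeal (f : S) {k : ℕ} {h h' : S}
    (hh : h - h' ∈ totalOrderIdeal k) :
    PowerSeries.comp' f h - PowerSeries.comp' f h' ∈ totalOrderIdeal k := by
  intro n m hnm
  rw [← Ideal.Quotient.eq] at hh
  have hsum : ∑ i ∈ Finset.range (n + 1), C (coeff i f) * h ^ i
      - ∑ i ∈ Finset.range (n + 1), C (coeff i f) * h' ^ i ∈ totalOrderIdeal k := by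
    rw [← Ideal.Quotient.eq]
    simp only [map_sum, map_mul, map_pow, hh]
  simpa [PowerSeries.comp'] using hsum n m hnm

lemma X_mem_totalOrderIdeal_one : (X : S) ∈ totalOrderIdeal 1 :=
  mem_totalOrderIdeal_one.mpr (by simp)

lemma comp'_X_mul_mul_sub_mem_totalOrderIdeal {f : S}
    (hf : constantCoeff (constantCoeff f) = 0) {k : ℕ} {G G' : S}
    (hG : G - G' ∈ totalOrderIdeal k) :
    PowerSeries.comp' f (X * G) * G - PowerSeries.comp' f (X * G') * G'
      ∈ totalOrderIdeal (k + 1) := by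
  have hfG' : PowerSeries.comp' f (X * G') ∈ totalOrderIdeal 1 := by
    rwa [mem_totalOrderIdeal_one, PowerSeries.constantCoeff_comp']
  have hXG : X * G - X * G' ∈ totalOrderIdeal (1 + k) := by
    rw [← mul_sub]; exact mul_mem_totalOrderIdeal X_mem_totalOrderIdeal_one hG
  rw [add_comm, show PowerSeries.comp' f (X * G) * G - PowerSeries.comp' f (X * G') * G'
      = (PowerSeries.comp' f (X * G) - PowerSeries.comp' f (X * G')) * G
        + PowerSeries.comp' f (X * G') * (G - G') by ring]
  exact add_mem (Ideal.mul_mem_right _ _ (comp'_sub_comp'_mem_totalOrderIdeal f hXG))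
    (mul_mem_totalOrderIdeal hfG' hG)

def mk₂ (c : ℕ × ℕ → ℂ) : S := PowerSeries.mk fun n => PowerSeries.mk fun m => c (n, m)

@[simp]
lemma coeff_coeff_mk₂ (c : ℕ × ℕ → ℂ) (n m : ℕ) : coeff m (coeff n (mk₂ c)) = c (n, m) := by
  simp [mk₂]

lemma mk₂_sub_mk₂_mem_totalOrderIdeal {k : ℕ} {c c' : ℕ × ℕ → ℂ}
    (h : ∀ n m, n + m < k → c (n, m) = c' (n, m)) : mk₂ c - mk₂ c' ∈ totalOrderIdeal k :=
  fun n m hnm => by simp [h n m hnm]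

lemma coeff_coeff_xDx_add_C_mul_X_mul_derivative (lam : ℂ) (g : S) (n m : ℕ) :
    coeff m (coeff n (xDx g + C (C lam) * (X * derivative R g)))
      = ((m : ℂ) + lam * n) * coeff m (coeff n g) := by
  have hn : ((n : R) * coeff n g) = C (n : ℂ) * coeff n g := by rw [map_natCast]
  simp [xDx, coeff_X_mul_derivative, coeff_C_mul, hn]
  ring

lemma natCast_add_mul_natCast_ne_zero {lam : ℂ} (hlam : ∀ r : ℚ, lam ≠ r) {n m : ℕ}
    (h : (n, m) ≠ (0, 0)) : (m : ℂ) + lam * n ≠ 0 := by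
  intro heq
  rcases Nat.eq_zero_or_pos n with rfl | hn
  · exact h (by simpa using heq)
  · refine hlam (-m / n) ?_
    push_cast
    rw [eq_div_iff (by exact_mod_cast hn.ne')]
    linear_combination heq

-- Fixed points of this map are the coefficient arrays of solutions of
-- `x ∂ₓg + λ y ∂ᵧg = f(x, y g) g` normalized by `g(0,0) = 1`.
noncomputable def linearizingCoeffMap (f : S) (lam : ℂ) (c : ℕ × ℕ → ℂ) : ℕ × ℕ → ℂ :=
  fun p => if p = (0, 0) then 1 else
    ((p.2 : ℂ) + lam * p.1)⁻¹ * coeff p.2 (coeff p.1 (PowerSeries.comp' f (X * mk₂ c) * mk₂ c))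

lemma linearizingCoeffMap_causal {f : S} (hf : constantCoeff (constantCoeff f) = 0) (lam : ℂ)
    (p : ℕ × ℕ) (c c' : ℕ × ℕ → ℂ) (h : ∀ q : ℕ × ℕ, q.1 + q.2 < p.1 + p.2 → c q = c' q) :
    linearizingCoeffMap f lam c p = linearizingCoeffMap f lam c' p := by
  have hc := comp'_X_mul_mul_sub_mem_totalOrderIdeal hf
    (mk₂_sub_mk₂_mem_totalOrderIdeal fun n m hnm => h (n, m) hnm)
  have hp := hc p.1 p.2 (Nat.lt_succ_self _)
  rw [map_sub, map_sub, sub_eq_zero] at hp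
  simp only [linearizingCoeffMap, hp]

theorem exists_linearizing_series {lam : ℂ} (hlam : ∀ r : ℚ, lam ≠ r) {f : S}
    (hf : constantCoeff (constantCoeff f) = 0) :
    ∃ g : S, constantCoeff (constantCoeff g) = 1 ∧
      xDx g + C (C lam) * (X * derivative R g) = PowerSeries.comp' f (X * g) * g := by
  obtain ⟨c, hc⟩ := (InvImage.wf (fun p : ℕ × ℕ => p.1 + p.2) wellFounded_lt)
    |>.exists_fixedPoint_of_causal (linearizingCoeffMap f lam) (linearizingCoeffMap_causal hf lam)
  refine ⟨mk₂ c, ?_, ?_⟩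
  · rw [← coeff_zero_eq_constantCoeff_apply, ← coeff_zero_eq_constantCoeff_apply,
      coeff_coeff_mk₂, ← hc, linearizingCoeffMap, if_pos rfl]
  ext n m
  rw [coeff_coeff_xDx_add_C_mul_X_mul_derivative, coeff_coeff_mk₂]
  by_cases h0 : (n, m) = (0, 0)
  · obtain ⟨rfl, rfl⟩ := Prod.mk.inj h0
    simp [PowerSeries.constantCoeff_comp', hf]
  · have hcnm := congrFun hc (n, m)
    rw [linearizingCoeffMap, if_neg h0] at hcnm
    rw [← hcnm, ← mul_assoc, mul_inv_cancel₀ (natCast_add_mul_natCast_ne_zero hlam h0), one_mul]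

end FormalSaddle

/-- formal Poincaré–Dulac linearization of a non-resonant saddle:
let `λ ∉ ℚ` and `f ∈ ℂ[[x,y]]` with `f(0,0) = 0`.  Then there is `g ∈ ℂ[[x,y]]` with
`g(0,0) = 1` such that `Φ(x,y) = (x, y·g)` transforms `ω = x dy − (λ+f) y dx` into a
form proportional to `ω₀ = x dy − λ y dx`, i.e. `Φ*ω ∧ ω₀ = 0`.  Writing
`Φ*ω = P dx + Q dy` with `P = −(λ + f∘Φ)·y·g + y·(x·∂g/∂x)` and `Q = x·(g + y·∂g/∂y)`,
this says `P·x + λ·y·Q = 0` in `ℂ[[x]][[y]]`. -/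
theorem formal_linearization_nonresonant_saddle
    (lam : ℂ) (hlam : ∀ r : ℚ, lam ≠ (r : ℂ))
    (f : S) (hf : constantCoeff (constantCoeff f) = 0) :
    ∃ g : S, constantCoeff (constantCoeff g) = 1 ∧
      (let y : S := X
       let x : S := PowerSeries.C X
       let lamS : S := PowerSeries.C (PowerSeries.C lam)
       let fΦ : S := PowerSeries.comp' f (y * g)      -- f(x, y·g)
       let P : S := -(lamS + fΦ) * (y * g) + y * xDx g
       let Q : S := x * (g + y * derivative (PowerSeries ℂ) g)
       P * x + lamS * y * Q = 0) := by
  obtain ⟨g, hg1, hg⟩ := FormalSaddle.exists_linearizing_series hlam hf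
  refine ⟨g, hg1, ?_⟩
  dsimp only
  linear_combination (C X * (X : S)) * hg
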